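/- Let n ≥ 1, let i ⊆ {1,…,n} be nonempty, and let X_i be the Pauli-X string on i (Kronecker product with X at positions in i and I elsewhere). Let S_1, …, S_M ⊆ {1,…,n} be subsets each having odd intersection with i (so that the Z-strings Z_{S_j} anticommute with X_i), let θ_1,…,θ_M be real angles, and set U_c := Π_{j=1}^{M} exp(−(θ_j/2)·i·Z_{S_j}). Then ⟨+|^{⊗n} U_c† X_i U_c |+⟩^{⊗n} = Σ_{r ∈ R} Π_{j=1}^{M} (i·sin θ_j)^{r_j} (cos θ_j)^{1 − r_j}, where R ⊆ {0,1}^M is the set of flip-vectors r such that for every qubit q ∈ {1,…,n}, the number Σ_{j : q ∈ S_j} r_j of Z-flips received by q is even. -/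

import Mathlib

open NormedSpace

noncomputable section

/-- The Pauli `X` matrix `[[0,1],[1,0]]`, indexed by `ZMod 2`. -/
def pauliX : Matrix (ZMod 2) (ZMod 2) ℂ :=
  Matrix.of fun a b => if a = b then 0 else 1

/-- The Pauli `Z` matrix `[[1,0],[0,−1]]`, indexed by `ZMod 2`. -/
def pauliZ : Matrix (ZMod 2) (ZMod 2) ℂ :=
  Matrix.of fun a b => if a = b then (if a = 0 then 1 else -1) else 0

/-- The `n`-fold Kronecker product of `2 × 2` matrices. -/
def kron {n : ℕ} (M : Fin n → Matrix (ZMod 2) (ZMod 2) ℂ) :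
    Matrix (Fin n → ZMod 2) (Fin n → ZMod 2) ℂ :=
  Matrix.of fun x y => ∏ i, M i (x i) (y i)

/-- The Pauli-`Z` string `Z_S`. -/
def pauliZString {n : ℕ} (S : Finset (Fin n)) :
    Matrix (Fin n → ZMod 2) (Fin n → ZMod 2) ℂ :=
  kron (fun i => if i ∈ S then pauliZ else 1)

/-- The Pauli-`X` string `X_S`. -/
def pauliXString {n : ℕ} (S : Finset (Fin n)) :
    Matrix (Fin n → ZMod 2) (Fin n → ZMod 2) ℂ :=
  kron (fun i => if i ∈ S then pauliX else 1)

/-- The `n`-qubit plus state `|+⟩^{⊗n}`. -/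
def plusVec (n : ℕ) : (Fin n → ZMod 2) → ℂ :=
  fun _ => ((Real.sqrt 2 : ℂ))⁻¹ ^ n


/-!
Each `Z_S` is diagonal in the computational basis, with eigenvalue
`ε_S(x) = ∏_{q ∈ S} (-1)^{x_q}`, so `U_c = diag D` with `D x = ∏_j exp(-i θ_j ε_{S_j}(x) / 2)`,
while `X_i` shifts basis states by the indicator `χ` of `i`. Hence the expectation is
`2^{-n} ∑_x conj (D x) * D (x + χ)`. An odd overlap of `S_j` with `i` means
`ε_{S_j}(x + χ) = -ε_{S_j}(x)`, so the two half-angle phases add up to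
`∏_j exp(i θ_j ε_{S_j}(x)) = ∏_j (cos θ_j + ε_{S_j}(x) i sin θ_j)`. Expanding this product over
flip vectors `r`, the `x`-dependence is the character `∏_q (-1)^{x_q · #{j | q ∈ S_j, r_j}}`,
whose sum over `x` is `2^n` if every count is even and `0` otherwise.
-/

open Matrix Complex

lemma ZMod.two_eq_zero_or_one (a : ZMod 2) : a = 0 ∨ a = 1 := by
  revert a
  decide

def bitSign (b : ZMod 2) : ℂ := (-1) ^ b.val

lemma bitSign_zero : bitSign 0 = 1 := pow_zero _

lemma bitSign_one : bitSign 1 = -1 := pow_one _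

lemma bitSign_add (a b : ZMod 2) : bitSign (a + b) = bitSign a * bitSign b := by
  rw [bitSign, ZMod.val_add, ← neg_one_pow_eq_pow_mod_two, pow_add, bitSign, bitSign]

lemma sum_bitSign_pow (k : ℕ) : ∑ b : ZMod 2, bitSign b ^ k = 1 + (-1) ^ k := by
  rw [show (Finset.univ : Finset (ZMod 2)) = {0, 1} by decide, Finset.sum_pair zero_ne_one,
    bitSign_zero, bitSign_one, one_pow]

lemma pauliZ_eq_diagonal : pauliZ = diagonal bitSign := by
  ext a b
  rcases a.two_eq_zero_or_one with rfl | rfl <;> rcases b.two_eq_zero_or_one with rfl | rfl <;>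
    simp [pauliZ, bitSign_zero, bitSign_one]

def shiftMatrix (c : ZMod 2) : Matrix (ZMod 2) (ZMod 2) ℂ :=
  of fun a b => if b = a + c then 1 else 0

lemma shiftMatrix_zero : shiftMatrix 0 = 1 := by
  ext a b
  simp [shiftMatrix, one_apply, eq_comm]

lemma shiftMatrix_one : shiftMatrix 1 = pauliX := by
  ext a b
  rcases a.two_eq_zero_or_one with rfl | rfl <;> rcases b.two_eq_zero_or_one with rfl | rfl <;>
    simp [shiftMatrix, pauliX, show (1 + 1 : ZMod 2) = 0 from rfl]

section Strings

variable {n : ℕ}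

lemma kron_diagonal (d : Fin n → ZMod 2 → ℂ) :
    kron (fun i => diagonal (d i)) = diagonal fun x => ∏ i, d i (x i) := by
  ext x y
  by_cases h : x = y
  · simp [kron, h]
  · obtain ⟨q, hq⟩ := Function.ne_iff.mp h
    rw [kron, of_apply, diagonal_apply_ne _ h]
    exact Finset.prod_eq_zero (Finset.mem_univ q) (diagonal_apply_ne (d q) hq)

lemma kron_shiftMatrix (c : Fin n → ZMod 2) :
    kron (fun i => shiftMatrix (c i)) = of fun x y => if y = x + c then 1 else 0 := by
  ext x y
  simp [kron, shiftMatrix, Finset.prod_boole, funext_iff]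

def zEigenvalue (S : Finset (Fin n)) (x : Fin n → ZMod 2) : ℂ :=
  ∏ q ∈ S, bitSign (x q)

def supportBits (s : Finset (Fin n)) : Fin n → ZMod 2 :=
  fun q => if q ∈ s then 1 else 0

lemma pauliZString_eq_diagonal (S : Finset (Fin n)) :
    pauliZString S = diagonal (zEigenvalue S) := by
  have h : ∀ i, (if i ∈ S then pauliZ else 1) =
      diagonal fun a => if i ∈ S then bitSign a else 1 :=
    fun i => by split_ifs <;> simp [pauliZ_eq_diagonal]
  simp only [pauliZString, h, kron_diagonal, Finset.prod_ite_mem_eq]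
  rfl

lemma pauliXString_apply (s : Finset (Fin n)) (x y : Fin n → ZMod 2) :
    pauliXString s x y = if y = x + supportBits s then 1 else 0 := by
  have h : ∀ i, (if i ∈ s then pauliX else 1) = shiftMatrix (supportBits s i) :=
    fun i => by unfold supportBits; split_ifs <;> simp [shiftMatrix_zero, shiftMatrix_one]
  simp only [pauliXString, h, kron_shiftMatrix, of_apply]

lemma zEigenvalue_eq_one_or_neg_one (S : Finset (Fin n)) (x : Fin n → ZMod 2) :
    zEigenvalue S x = 1 ∨ zEigenvalue S x = -1 := by
  refine Finset.prod_induction _ (fun a => a = 1 ∨ a = -1) ?_ (Or.inl rfl)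
    fun q _ => neg_one_pow_eq_or ℂ _
  rintro a b (rfl | rfl) (rfl | rfl) <;> norm_num

lemma zEigenvalue_add_supportBits {S s : Finset (Fin n)} (hodd : Odd (S ∩ s).card)
    (x : Fin n → ZMod 2) : zEigenvalue S (x + supportBits s) = -zEigenvalue S x := by
  have hflip : ∀ q, bitSign (supportBits s q) = if q ∈ s then -1 else 1 := fun q => by
    unfold supportBits; split_ifs <;> simp [bitSign_zero, bitSign_one]
  simp only [zEigenvalue, Pi.add_apply, bitSign_add, Finset.prod_mul_distrib, hflip,
    Finset.prod_ite_mem, Finset.prod_const, hodd.neg_one_pow, mul_neg_one]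

end Strings

lemma exp_smul_diagonal {m : Type*} [Fintype m] [DecidableEq m] (c : ℂ) (v : m → ℂ) :
    NormedSpace.exp (c • diagonal v) = diagonal fun x => Complex.exp (c * v x) := by
  rw [← diagonal_smul, exp_diagonal]
  congr; ext x
  rw [Pi.coe_exp, Pi.smul_apply, smul_eq_mul, Complex.exp_eq_exp_ℂ]

lemma list_prod_ofFn_diagonal {m α : Type*} [Fintype m] [DecidableEq m] [CommSemiring α] {M : ℕ}
    (d : Fin M → m → α) :
    (List.ofFn fun j => diagonal (d j)).prod = diagonal fun x => ∏ j, d j x := by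
  change (List.ofFn (diagonal ∘ d)).prod = _
  rw [← List.map_ofFn, show diagonal = ⇑(diagonalRingHom m α) from rfl, ← map_list_prod,
    List.prod_ofFn]
  congr; ext x
  exact Finset.prod_apply x _ _

section Circuit

variable {n M : ℕ}

lemma list_prod_exp_smul_pauliZString (c : Fin M → ℂ) (S : Fin M → Finset (Fin n)) :
    (List.ofFn fun j => NormedSpace.exp (c j • pauliZString (S j))).prod =
      diagonal fun x => ∏ j, Complex.exp (c j * zEigenvalue (S j) x) := by
  simp only [pauliZString_eq_diagonal, exp_smul_diagonal, list_prod_ofFn_diagonal]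

lemma diagonal_conj_pauliXString_apply (D : (Fin n → ZMod 2) → ℂ) (s : Finset (Fin n))
    (x y : Fin n → ZMod 2) :
    ((diagonal D)ᴴ * pauliXString s * diagonal D) x y =
      if y = x + supportBits s then starRingEnd ℂ (D x) * D y else 0 := by
  rw [diagonal_conjTranspose, mul_diagonal, diagonal_mul, pauliXString_apply]
  split_ifs <;> simp

lemma sum_star_plusVec_mul_mulVec (A : Matrix (Fin n → ZMod 2) (Fin n → ZMod 2) ℂ) :
    ∑ x, starRingEnd ℂ (plusVec n x) * (A *ᵥ plusVec n) x = (2 ^ n)⁻¹ * ∑ x, ∑ y, A x y := by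
  have h : starRingEnd ℂ ((Real.sqrt 2 : ℂ)⁻¹ ^ n) * (Real.sqrt 2 : ℂ)⁻¹ ^ n = (2 ^ n)⁻¹ := by
    rw [map_pow, map_inv₀, conj_ofReal, ← mul_pow, ← mul_inv, ← ofReal_mul,
      Real.mul_self_sqrt zero_le_two, ofReal_ofNat, inv_pow]
  simp only [plusVec, mulVec, dotProduct, Finset.mul_sum]
  refine Finset.sum_congr rfl fun x _ => Finset.sum_congr rfl fun y _ => ?_
  rw [← h]
  ring

end Circuit

lemma star_exp_mul_exp_neg {θ : ℝ} {ε : ℂ} (hε : ε = 1 ∨ ε = -1) :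
    starRingEnd ℂ (Complex.exp (-(θ / 2 : ℂ) * I * ε)) * Complex.exp (-(θ / 2 : ℂ) * I * -ε) =
      Real.cos θ + ε * (I * Real.sin θ) := by
  have hstar : starRingEnd ℂ ε = ε := by rcases hε with rfl | rfl <;> simp
  have hsum : starRingEnd ℂ (-(θ / 2 : ℂ) * I * ε) + -(θ / 2 : ℂ) * I * -ε = θ * I * ε := by
    simp only [map_mul, map_neg, map_div₀, conj_ofReal, map_ofNat, conj_I, hstar]
    ring
  rw [← Complex.exp_conj, ← Complex.exp_add, hsum]
  rcases hε with rfl | rfl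
  · rw [mul_one, exp_mul_I, ← ofReal_cos, ← ofReal_sin]
    ring
  · rw [mul_neg_one, ← neg_mul, ← ofReal_neg, exp_mul_I, ← ofReal_cos, ← ofReal_sin,
      Real.cos_neg, Real.sin_neg, ofReal_neg]
    ring

lemma prod_add_mul_eq_sum_bool {ι R : Type*} [Fintype ι] [DecidableEq ι] [CommSemiring R]
    (a b e : ι → R) :
    ∏ j, (a j + e j * b j) =
      ∑ r : ι → Bool, (∏ j, if r j then b j else a j) * ∏ j, if r j then e j else 1 := by
  have h : ∀ j, a j + e j * b j = ∑ t : Bool, if t then e j * b j else a j := fun j => by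
    rw [Fintype.sum_bool, if_pos rfl, if_neg Bool.false_ne_true, add_comm]
  simp only [h, Fintype.prod_sum, ← Finset.prod_mul_distrib]
  refine Finset.sum_congr rfl fun r _ => Finset.prod_congr rfl fun j _ => ?_
  split_ifs <;> ring

lemma prod_one_add_neg_one_pow {ι R : Type*} [Fintype ι] [CommRing R] (c : ι → ℕ) :
    ∏ q, (1 + (-1 : R) ^ c q) = if ∀ q, Even (c q) then 2 ^ Fintype.card ι else 0 := by
  split_ifs with h
  · rw [Finset.prod_congr rfl fun q _ => by rw [(h q).neg_one_pow, one_add_one_eq_two],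
      Finset.prod_const, Finset.card_univ]
  · obtain ⟨q, hq⟩ := not_forall.mp h
    exact Finset.prod_eq_zero (Finset.mem_univ q)
      (by rw [(Nat.not_even_iff_odd.mp hq).neg_one_pow, add_neg_cancel])

section Flips

variable {n M : ℕ}

def flipCount (S : Fin M → Finset (Fin n)) (r : Fin M → Bool) (q : Fin n) : ℕ :=
  (Finset.univ.filter fun j => q ∈ S j ∧ r j = true).card

lemma prod_zEigenvalue_eq_prod_bitSign_pow (S : Fin M → Finset (Fin n)) (r : Fin M → Bool)
    (x : Fin n → ZMod 2) :
    ∏ j, (if r j then zEigenvalue (S j) x else 1) = ∏ q, bitSign (x q) ^ flipCount S r q := by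
  calc ∏ j, (if r j then zEigenvalue (S j) x else 1)
      = ∏ j, ∏ q, if q ∈ S j ∧ r j = true then bitSign (x q) else 1 := by
        refine Finset.prod_congr rfl fun j _ => ?_
        cases r j <;> simp [zEigenvalue]
    _ = ∏ q, bitSign (x q) ^ flipCount S r q := by
        rw [Finset.prod_comm]
        simp only [← Finset.prod_filter, Finset.prod_const, flipCount]

lemma sum_prod_zEigenvalue (S : Fin M → Finset (Fin n)) (r : Fin M → Bool) :
    ∑ x : Fin n → ZMod 2, ∏ j, (if r j then zEigenvalue (S j) x else 1) =
      if ∀ q, Even (flipCount S r q) then 2 ^ n else 0 := by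
  simp only [prod_zEigenvalue_eq_prod_bitSign_pow,
    ← Fintype.prod_sum (fun q b => bitSign b ^ flipCount S r q), sum_bitSign_pow]
  rw [prod_one_add_neg_one_pow, Fintype.card_fin]
  congr

end Flips

theorem iqp_pauli_propagation_closed_form_general
    (n M : ℕ) (iset : Finset (Fin n))
    (S : Fin M → Finset (Fin n)) (hodd : ∀ j, Odd ((S j) ∩ iset).card)
    (θ : Fin M → ℝ)
    (Uc : Matrix (Fin n → ZMod 2) (Fin n → ZMod 2) ℂ)
    (hUc : Uc = (List.ofFn fun j =>
      exp ((-(θ j / 2 : ℂ) * Complex.I) • pauliZString (S j))).prod) :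
    ∑ x : Fin n → ZMod 2,
        (starRingEnd ℂ) (plusVec n x) *
          ((Uc.conjTranspose * pauliXString iset * Uc).mulVec (plusVec n) x) =
      ∑ r ∈ Finset.univ.filter (fun r : Fin M → Bool =>
          ∀ q : Fin n,
            Even ((Finset.univ.filter (fun j => q ∈ S j ∧ r j = true)).card)),
        ∏ j : Fin M,
          (if r j then Complex.I * (Real.sin (θ j) : ℂ)
           else (Real.cos (θ j) : ℂ)) := by
  have hphase : ∀ x,
      starRingEnd ℂ (∏ j, Complex.exp (-(θ j / 2 : ℂ) * I * zEigenvalue (S j) x)) *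
        ∏ j, Complex.exp (-(θ j / 2 : ℂ) * I * zEigenvalue (S j) (x + supportBits iset)) =
      ∏ j, (Real.cos (θ j) + zEigenvalue (S j) x * (I * Real.sin (θ j))) := fun x => by
    rw [map_prod, ← Finset.prod_mul_distrib]
    refine Finset.prod_congr rfl fun j _ => ?_
    rw [zEigenvalue_add_supportBits (hodd j),
      star_exp_mul_exp_neg (zEigenvalue_eq_one_or_neg_one _ _)]
  rw [hUc, list_prod_exp_smul_pauliZString, sum_star_plusVec_mul_mulVec]
  simp only [diagonal_conj_pauliXString_apply, Finset.sum_ite_eq', Finset.mem_univ, if_true,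
    hphase, prod_add_mul_eq_sum_bool]
  rw [Finset.sum_comm, Finset.mul_sum, Finset.sum_filter]
  refine Finset.sum_congr rfl fun r _ => ?_
  rw [← Finset.mul_sum, mul_left_comm, sum_prod_zEigenvalue]
  simp only [flipCount]
  split_ifs with h <;> simp [h]

/-- **Closed-form Pauli-propagation surrogate for a Z-type IQP circuit.**
With `U_c = Π_j exp(−(θ_j/2) i Z_{S_j})` where every `S_j` has odd intersection
with the nonempty support `i` of the observable `X_i`, the plus-state expectation
`⟨+|^{⊗n} U_c† X_i U_c |+⟩^{⊗n}` equals the sum over flip-vectors `r` in which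
every qubit receives an even number of Z-flips of the trigonometric weights
`Π_j (i sin θ_j)^{r_j} (cos θ_j)^{1−r_j}`. -/
theorem iqp_pauli_propagation_closed_form
    (n M : ℕ) (hn : 1 ≤ n) (iset : Finset (Fin n)) (hiset : iset.Nonempty)
    (S : Fin M → Finset (Fin n)) (hodd : ∀ j, Odd ((S j) ∩ iset).card)
    (θ : Fin M → ℝ)
    (Uc : Matrix (Fin n → ZMod 2) (Fin n → ZMod 2) ℂ)
    (hUc : Uc = (List.ofFn fun j =>
      exp ((-(θ j / 2 : ℂ) * Complex.I) • pauliZString (S j))).prod) :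
    ∑ x : Fin n → ZMod 2,
        (starRingEnd ℂ) (plusVec n x) *
          ((Uc.conjTranspose * pauliXString iset * Uc).mulVec (plusVec n) x) =
      ∑ r ∈ Finset.univ.filter (fun r : Fin M → Bool =>
          ∀ q : Fin n,
            Even ((Finset.univ.filter (fun j => q ∈ S j ∧ r j = true)).card)),
        ∏ j : Fin M,
          (if r j then Complex.I * (Real.sin (θ j) : ℂ)
           else (Real.cos (θ j) : ℂ)) :=
  iqp_pauli_propagation_closed_form_general n M iset S hodd θ Uc hUc
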